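/- Let G^{(k)} ⊂ ℕ^{2k+1} be the multi-index sets with G^{(1)} = {(1,0,0),(0,1,0),(0,0,1)} and G^{(k)} = {α ∈ ℕ^{2k+1} : |α|=1} + G^{(k-1)}×{0}×{0}. Then for every k ≥ 1, ∑_{α ∈ G^{(k)}} ∏_{j=1}^{2k+1} α_j! ≤ (2(2k+1))^k. -/

import Mathlib

/-!
Every `α ∈ G^{(k+1)}` arises as `e_j + (β, 0, 0)` with `β ∈ G^{(k)}` (possibly in several ways,
which only helps the upper bound), and adding `e_j` multiplies
`∏ α_i!` by `β_j + 1`. Summing over the `2k + 3` positions `j` gives the factor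
`|β| + 2k + 3 = 3(k + 1)`, so `∑_{α ∈ G^{(k)}} ∏ α_i! ≤ 3^k k! ≤ (3k)^k ≤ (2(2k+1))^k`.
-/

def unitL (n : ℕ) : Finset (List ℕ) :=
  (Finset.range n).image fun j => (List.range n).map fun i => if i = j then 1 else 0

def Gset : ℕ → Finset (List ℕ)
  | 0 => ∅
  | 1 => {[1, 0, 0], [0, 1, 0], [0, 0, 1]}
  | (n + 2) => ((unitL (2 * (n + 2) + 1)) ×ˢ ((Gset (n + 1)).image fun a => a ++ [0, 0])).image
      fun p => List.zipWith (· + ·) p.1 p.2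

open Finset Nat

namespace List

theorem zipWith_add_indicator_eq_modify {n j : ℕ} {l : List ℕ} (hl : l.length = n) :
    zipWith (· + ·) ((range n).map fun i => if i = j then 1 else 0) l = l.modify j (· + 1) := by
  subst hl
  refine ext_getElem (by simp) fun i _ _ => ?_
  simp only [getElem_zipWith, getElem_map, getElem_range, getElem_modify]
  split_ifs <;> omega

theorem sum_modify_add_one :
    ∀ {l : List ℕ} {j : ℕ}, j < l.length → (l.modify j (· + 1)).sum = l.sum + 1
  | a :: l, 0, _ => by simp; ring
  | a :: l, j + 1, hj => by
    simp [sum_modify_add_one (Nat.lt_of_succ_lt_succ hj)]; ring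

theorem sum_range_prod_map_factorial_modify_add_one :
    ∀ l : List ℕ, ∑ j ∈ Finset.range l.length, ((l.modify j (· + 1)).map factorial).prod =
      (l.sum + l.length) * (l.map factorial).prod
  | [] => by simp
  | a :: l => by
    rw [length_cons, Finset.sum_range_succ']
    simp only [modify_succ_cons, modify_zero_cons, map_cons, prod_cons, ← Finset.mul_sum,
      sum_range_prod_map_factorial_modify_add_one l, sum_cons, factorial_succ]
    ring

end List

theorem length_of_mem_Gset : ∀ {k : ℕ} {α : List ℕ}, α ∈ Gset k → α.length = 2 * k + 1
  | 0, _, h => by simp [Gset] at h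
  | 1, _, h => by simp only [Gset, mem_insert, mem_singleton] at h; rcases h with rfl | rfl | rfl <;> rfl
  | n + 2, _, h => by
    simp only [Gset, unitL, mem_image, mem_product, mem_range] at h
    obtain ⟨⟨_, _⟩, ⟨⟨_, -, rfl⟩, β, hβ, rfl⟩, rfl⟩ := h
    simp [length_of_mem_Gset hβ]
    omega

theorem Gset_add_two (n : ℕ) :
    Gset (n + 2) = (range (2 * (n + 2) + 1) ×ˢ Gset (n + 1)).image
      fun p => (p.2 ++ [0, 0]).modify p.1 (· + 1) := by
  rw [Gset, unitL, ← prodMap_image_product, image_image]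
  refine image_congr fun p hp => ?_
  refine List.zipWith_add_indicator_eq_modify ?_
  simp [length_of_mem_Gset (mem_product.1 hp).2]
  omega

theorem sum_of_mem_Gset : ∀ {k : ℕ} {α : List ℕ}, α ∈ Gset k → α.sum = k
  | 0, _, h => by simp [Gset] at h
  | 1, _, h => by simp only [Gset, mem_insert, mem_singleton] at h; rcases h with rfl | rfl | rfl <;> rfl
  | n + 2, _, h => by
    simp only [Gset_add_two, mem_image, mem_product, mem_range] at h
    obtain ⟨⟨j, β⟩, ⟨hj, hβ⟩, rfl⟩ := h
    rw [List.sum_modify_add_one (by simp [length_of_mem_Gset hβ]; omega)]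
    simp [sum_of_mem_Gset hβ]

theorem sum_Gset_add_two_le (n : ℕ) :
    ∑ α ∈ Gset (n + 2), (α.map factorial).prod ≤
      3 * (n + 2) * ∑ β ∈ Gset (n + 1), (β.map factorial).prod := by
  rw [Gset_add_two, mul_sum]
  refine (sum_image_le_of_nonneg fun _ _ => Nat.zero_le _).trans_eq ?_
  rw [sum_product_right]
  refine sum_congr rfl fun β hβ => ?_
  have hlen : (β ++ [0, 0]).length = 2 * (n + 2) + 1 := by
    simp [length_of_mem_Gset hβ]; omega
  rw [← hlen, List.sum_range_prod_map_factorial_modify_add_one, hlen]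
  simp only [List.sum_append, sum_of_mem_Gset hβ, List.map_append, List.prod_append, List.sum_cons,
    List.sum_nil, List.map_cons, List.map_nil, List.prod_cons, List.prod_nil, factorial_zero]
  ring

theorem sum_Gset_le_three_pow_mul_factorial :
    ∀ k : ℕ, ∑ α ∈ Gset k, (α.map factorial).prod ≤ 3 ^ k * k !
  | 0 => by simp [Gset]
  | 1 => by decide
  | n + 2 =>
    calc ∑ α ∈ Gset (n + 2), (α.map factorial).prod
        ≤ 3 * (n + 2) * ∑ β ∈ Gset (n + 1), (β.map factorial).prod := sum_Gset_add_two_le n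
      _ ≤ 3 * (n + 2) * (3 ^ (n + 1) * (n + 1)!) :=
          Nat.mul_le_mul_left _ (sum_Gset_le_three_pow_mul_factorial (n + 1))
      _ = 3 ^ (n + 2) * (n + 2)! := by rw [factorial_succ (n + 1)]; ring

theorem Gset_sum_factorial_le_general (k : ℕ) :
    ∑ α ∈ Gset k, (α.map Nat.factorial).prod ≤ (2 * (2 * k + 1)) ^ k :=
  calc ∑ α ∈ Gset k, (α.map Nat.factorial).prod
      ≤ 3 ^ k * k ! := sum_Gset_le_three_pow_mul_factorial k
    _ ≤ 3 ^ k * k ^ k := Nat.mul_le_mul_left _ k.factorial_le_pow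
    _ = (3 * k) ^ k := (mul_pow 3 k k).symm
    _ ≤ (2 * (2 * k + 1)) ^ k := Nat.pow_le_pow_left (by omega) k

theorem Gset_sum_factorial_le (k : ℕ) (hk : 1 ≤ k) :
    ∑ α ∈ Gset k, (α.map Nat.factorial).prod ≤ (2 * (2 * k + 1)) ^ k :=
  Gset_sum_factorial_le_general k
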